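/- Let V be a nonempty finite type, ℓu Δℓ : V → ℝ, y⋆ : V, and for w : ℝ let π_w(a) = exp(ℓu a + w * Δℓ a) / Z(w) with Z(w) = ∑_{k ∈ V} exp(ℓu k + w * Δℓ k), and L(w) = -log(π_w y⋆). Suppose the Advantage Margin Condition Δℓ y⋆ > ∑_{a ∈ V} π_v(a) * Δℓ a holds for every v in the closed interval [0, w₀] with w₀ > 0. Then L is strictly decreasing on [0, w₀]; in particular L(w₀) < L(0), i.e. the guided policy at guidance scale w₀ assigns strictly higher probability to the correct token y⋆ than the reference policy π_0. -/

import Mathlib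

open Real Finset

noncomputable def Zfun {V : Type*} [Fintype V] (ℓu Δℓ : V → ℝ) (w : ℝ) : ℝ :=
  ∑ k, Real.exp (ℓu k + w * Δℓ k)

noncomputable def pol {V : Type*} [Fintype V] (ℓu Δℓ : V → ℝ) (w : ℝ) (a : V) : ℝ :=
  Real.exp (ℓu a + w * Δℓ a) / Zfun ℓu Δℓ w

noncomputable def lossCE {V : Type*} [Fintype V] (ℓu Δℓ : V → ℝ) (ystar : V) (w : ℝ) : ℝ :=
  -Real.log (pol ℓu Δℓ w ystar)

/-! The loss is `L(w) = log Z(w) - (ℓu y⋆ + w Δℓ y⋆)`, whose derivative is the mean of `Δℓ`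
under `π_w` minus `Δℓ y⋆`. The margin condition says exactly that this derivative is negative,
and `π_w y⋆ = exp (-L(w))` turns the decrease of `L` into an increase of `π_w y⋆`. -/

section

variable {V : Type*} [Fintype V] (ℓu Δℓ : V → ℝ)

theorem Zfun_pos [Nonempty V] (w : ℝ) : 0 < Zfun ℓu Δℓ w :=
  Finset.sum_pos (fun _ _ => Real.exp_pos _) Finset.univ_nonempty

theorem pol_pos (w : ℝ) (a : V) : 0 < pol ℓu Δℓ w a :=
  have : Nonempty V := ⟨a⟩
  div_pos (Real.exp_pos _) (Zfun_pos ℓu Δℓ w)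

theorem exp_neg_lossCE (ystar : V) (w : ℝ) :
    Real.exp (-lossCE ℓu Δℓ ystar w) = pol ℓu Δℓ w ystar := by
  rw [lossCE, neg_neg, Real.exp_log (pol_pos ℓu Δℓ w ystar)]

theorem lossCE_eq_log_Zfun_sub (ystar : V) (w : ℝ) :
    lossCE ℓu Δℓ ystar w = Real.log (Zfun ℓu Δℓ w) - (ℓu ystar + w * Δℓ ystar) := by
  have : Nonempty V := ⟨ystar⟩
  rw [lossCE, pol, Real.log_div (Real.exp_ne_zero _) (Zfun_pos ℓu Δℓ w).ne', Real.log_exp]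
  ring

theorem hasDerivAt_affine (a b w : ℝ) : HasDerivAt (fun v : ℝ => a + v * b) b w := by
  simpa using (hasDerivAt_mul_const b).const_add a

theorem hasDerivAt_Zfun (w : ℝ) :
    HasDerivAt (Zfun ℓu Δℓ) (∑ k, Real.exp (ℓu k + w * Δℓ k) * Δℓ k) w :=
  HasDerivAt.fun_sum fun k _ => (hasDerivAt_affine (ℓu k) (Δℓ k) w).exp

theorem sum_exp_mul_div_Zfun (w : ℝ) :
    (∑ k, Real.exp (ℓu k + w * Δℓ k) * Δℓ k) / Zfun ℓu Δℓ w = ∑ a, pol ℓu Δℓ w a * Δℓ a := by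
  rw [Finset.sum_div]
  exact Finset.sum_congr rfl fun a _ => div_mul_eq_mul_div _ _ _ |>.symm

theorem hasDerivAt_lossCE (ystar : V) (w : ℝ) :
    HasDerivAt (lossCE ℓu Δℓ ystar) ((∑ a, pol ℓu Δℓ w a * Δℓ a) - Δℓ ystar) w := by
  have : Nonempty V := ⟨ystar⟩
  have hlogZ := (hasDerivAt_Zfun ℓu Δℓ w).log (Zfun_pos ℓu Δℓ w).ne'
  rw [sum_exp_mul_div_Zfun] at hlogZ
  have hloss := hlogZ.sub (hasDerivAt_affine (ℓu ystar) (Δℓ ystar) w)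
  exact hloss.congr_of_eventuallyEq (.of_forall (lossCE_eq_log_Zfun_sub ℓu Δℓ ystar))

end

theorem loss_strictAnti_of_margin_general {V : Type*} [Fintype V]
    (ℓu Δℓ : V → ℝ) (ystar : V) (w₀ : ℝ) (hw₀ : 0 < w₀)
    (hmargin : ∀ v ∈ Set.Icc (0 : ℝ) w₀,
      Δℓ ystar > ∑ a, pol ℓu Δℓ v a * Δℓ a) :
    StrictAntiOn (lossCE ℓu Δℓ ystar) (Set.Icc 0 w₀) ∧
      lossCE ℓu Δℓ ystar w₀ < lossCE ℓu Δℓ ystar 0 ∧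
      pol ℓu Δℓ 0 ystar < pol ℓu Δℓ w₀ ystar := by
  have hderiv := hasDerivAt_lossCE ℓu Δℓ ystar
  have hanti : StrictAntiOn (lossCE ℓu Δℓ ystar) (Set.Icc 0 w₀) := by
    refine strictAntiOn_of_deriv_neg (convex_Icc 0 w₀)
      (fun w _ => (hderiv w).continuousAt.continuousWithinAt) fun w hw => ?_
    rw [interior_Icc] at hw
    rw [(hderiv w).deriv, sub_neg]
    exact hmargin w (Set.Ioo_subset_Icc_self hw)
  have hlt : lossCE ℓu Δℓ ystar w₀ < lossCE ℓu Δℓ ystar 0 :=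
    hanti (Set.left_mem_Icc.mpr hw₀.le) (Set.right_mem_Icc.mpr hw₀.le) hw₀
  refine ⟨hanti, hlt, ?_⟩
  rw [← exp_neg_lossCE, ← exp_neg_lossCE]
  exact Real.exp_lt_exp.mpr (neg_lt_neg hlt)

/-- If the Advantage Margin Condition holds for every `v ∈ [0, w₀]` with
`w₀ > 0`, then the loss `L` is strictly decreasing on `[0, w₀]`; in particular
`L(w₀) < L(0)`, i.e. the guided policy at scale `w₀` assigns strictly higher
probability to `y⋆` than the reference policy `π_0`. -/
theorem loss_strictAnti_of_margin {V : Type*} [Fintype V] [Nonempty V]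
    (ℓu Δℓ : V → ℝ) (ystar : V) (w₀ : ℝ) (hw₀ : 0 < w₀)
    (hmargin : ∀ v ∈ Set.Icc (0 : ℝ) w₀,
      Δℓ ystar > ∑ a, pol ℓu Δℓ v a * Δℓ a) :
    StrictAntiOn (lossCE ℓu Δℓ ystar) (Set.Icc 0 w₀) ∧
      lossCE ℓu Δℓ ystar w₀ < lossCE ℓu Δℓ ystar 0 ∧
      pol ℓu Δℓ 0 ystar < pol ℓu Δℓ w₀ ystar :=
  loss_strictAnti_of_margin_general ℓu Δℓ ystar w₀ hw₀ hmargin
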